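/- arXiv:0709.1897 — 2 statements merged into one kernel-verified Lean document; each statement's English description precedes it below -/
import Mathlib

section
/- (Closed-loop equations of the normal extremals.) Let A, B ∈ su(1,1) and T ∈ su(1,1), and let X : ℝ → M₂(ℂ) be differentiable with X(t) invertible for all t, satisfying the closed-loop equation X′(t) = (A + u_B(t)·B)·X(t), where u_B(t) := −2·Tr(T · X(t)⁻¹ · B · X(t)). Define u_A(t) := −2·Tr(T · X(t)⁻¹ · A · X(t)) and u_C(t) := −2·Tr(T · X(t)⁻¹ · (A·B − B·A) · X(t)). Then for all t: u_A′(t) = u_B(t)·u_C(t); u_B′(t) = −u_C(t); and u_C′(t) = α·u_A(t) − β·u_B(t) + γ·u_A(t)·u_B(t) − α·u_B(t)², where α = 2·Tr(A·B), β = 2·Tr(A·A), γ = 2·Tr(B·B). -/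
/-
With `X' = L X`, the product rule and `(X⁻¹)' = -X⁻¹ X' X⁻¹` give `(X⁻¹ M X)' = X⁻¹ [M, L] X`,
so `u_M' = u_{[M, L]}` for every fixed `M`, where `L = A + u_B B`.
The three equations then follow by bilinearity of the bracket once `[[A, B], A]` and `[[A, B], B]`
are expressed in `A` and `B`; for traceless `2 × 2` matrices this comes from Cayley–Hamilton in
the polarised form `A B + B A = Tr(A B) • 1`.
-/

open Matrix

/-- The metric matrix η = diag(1, -1). -/
def eta : Matrix (Fin 2) (Fin 2) ℂ := !![1, 0; 0, -1]

/-- Membership in the Lie algebra su(1,1): trace zero and Mᴴη + ηM = 0. -/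
def su11 (M : Matrix (Fin 2) (Fin 2) ℂ) : Prop :=
  M.trace = 0 ∧ Mᴴ * eta + eta * M = 0

attribute [local instance] LieRing.ofAssociativeRing

section Derivatives

variable {𝕜 : Type*} [RCLike 𝕜] {n : Type*} [Fintype n] [DecidableEq n]
  {X : ℝ → Matrix n n 𝕜} {X' : Matrix n n 𝕜} {t : ℝ}

/- `HasDerivAt` only depends on the topology, so any normed-algebra structure on matrices may be
used to access the product rule and the derivative of `Ring.inverse`. -/
attribute [local instance] Matrix.linftyOpNormedRing Matrix.linftyOpNormedAlgebra

omit [DecidableEq n] in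
theorem HasDerivAt.matrix_trace (hX : HasDerivAt X X' t) :
    HasDerivAt (fun s => (X s).trace) X'.trace t :=
  HasDerivAt.fun_sum fun i _ => hasDerivAt_pi.1 (hasDerivAt_pi.1 hX i) i

theorem HasDerivAt.matrix_inv (hX : HasDerivAt X X' t) (ht : IsUnit (X t)) :
    HasDerivAt (fun s => (X s)⁻¹) (-((X t)⁻¹ * X' * (X t)⁻¹)) t := by
  have h := (ht.unit_spec ▸ hasFDerivAt_ringInverse (𝕜 := ℝ) ht.unit).comp_hasDerivAt t hX
  rw [← Ring.inverse_unit, ht.unit_spec] at h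
  simp only [Function.comp_def, ← nonsing_inv_eq_ringInverse] at h
  exact h

theorem Matrix.hasDerivAt_trace_mul_inv_mul_mul {L : Matrix n n 𝕜}
    (hX : HasDerivAt X (L * X t) t) (ht : IsUnit (X t)) (T M : Matrix n n 𝕜) :
    HasDerivAt (fun s => (T * (X s)⁻¹ * M * X s).trace)
      (T * (X t)⁻¹ * ⁅M, L⁆ * X t).trace t := by
  have h := (((hX.matrix_inv ht).const_mul T).mul_const M).mul hX
  refine h.matrix_trace.congr_deriv ?_
  have hXY : X t * (X t)⁻¹ = 1 := mul_nonsing_inv _ ((isUnit_iff_isUnit_det _).mp ht)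
  rw [Ring.lie_def]
  congr 1
  calc _ = T * (X t)⁻¹ * (M * L) * X t
          - T * ((X t)⁻¹ * L) * (X t * (X t)⁻¹) * M * X t := by noncomm_ring
    _ = _ := by rw [hXY]; noncomm_ring

end Derivatives

section TraceZero

variable {R : Type*} [CommRing R] {A B : Matrix (Fin 2) (Fin 2) R}

theorem Matrix.mul_add_mul_eq_trace_smul_one (hA : A.trace = 0) (hB : B.trace = 0) :
    A * B + B * A = (A * B).trace • 1 := by
  rw [trace_fin_two] at hA hB
  have hA11 : A 1 1 = -A 0 0 := by linear_combination hA
  have hB11 : B 1 1 = -B 0 0 := by linear_combination hB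
  ext i j
  fin_cases i <;> fin_cases j <;> simp [Matrix.mul_apply, trace_fin_two, hA11, hB11] <;> ring

theorem Matrix.lie_lie_self_of_trace_eq_zero (hA : A.trace = 0) (hB : B.trace = 0) :
    ⁅⁅A, B⁆, A⁆ = (2 * (A * B).trace) • A - (2 * (A * A).trace) • B := by
  calc ⁅⁅A, B⁆, A⁆ = A * (A * B + B * A) + (A * B + B * A) * A - (A * A + A * A) * B
        - B * (A * A + A * A) := by simp only [Ring.lie_def]; noncomm_ring
    _ = _ := by
      rw [mul_add_mul_eq_trace_smul_one hA hB, mul_add_mul_eq_trace_smul_one hA hA]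
      simp only [Matrix.mul_smul, Matrix.smul_mul, mul_one, one_mul]
      module

end TraceZero

theorem stmt7_general (A B T : Matrix (Fin 2) (Fin 2) ℂ) (hA : su11 A) (hB : su11 B)
    (X : ℝ → Matrix (Fin 2) (Fin 2) ℂ) (hinv : ∀ t, IsUnit (X t))
    -- closed-loop dynamics: X′(t) = (A + u_B(t)·B)·X(t) with
    -- u_B(t) = −2·Tr(T·X(t)⁻¹·B·X(t))
    (hX : ∀ t i j, HasDerivAt (fun s => X s i j)
      (((A + (-2 * (T * (X t)⁻¹ * B * X t).trace) • B) * X t) i j) t) :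
    ∀ t,
      -- u_A′(t) = u_B(t)·u_C(t)
      HasDerivAt (fun s => -2 * (T * (X s)⁻¹ * A * X s).trace)
        ((-2 * (T * (X t)⁻¹ * B * X t).trace) *
          (-2 * (T * (X t)⁻¹ * (A * B - B * A) * X t).trace)) t ∧
      -- u_B′(t) = −u_C(t)
      HasDerivAt (fun s => -2 * (T * (X s)⁻¹ * B * X s).trace)
        (-(-2 * (T * (X t)⁻¹ * (A * B - B * A) * X t).trace)) t ∧
      -- u_C′(t) = α·u_A(t) − β·u_B(t) + γ·u_A(t)·u_B(t) − α·u_B(t)²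
      HasDerivAt (fun s => -2 * (T * (X s)⁻¹ * (A * B - B * A) * X s).trace)
        ((2 * (A * B).trace) * (-2 * (T * (X t)⁻¹ * A * X t).trace)
          - (2 * (A * A).trace) * (-2 * (T * (X t)⁻¹ * B * X t).trace)
          + (2 * (B * B).trace) * (-2 * (T * (X t)⁻¹ * A * X t).trace) *
              (-2 * (T * (X t)⁻¹ * B * X t).trace)
          - (2 * (A * B).trace) * (-2 * (T * (X t)⁻¹ * B * X t).trace) ^ 2) t := by
  intro t
  set uB := -2 * (T * (X t)⁻¹ * B * X t).trace
  have hXd : HasDerivAt X ((A + uB • B) * X t) t :=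
    hasDerivAt_pi.2 fun i => hasDerivAt_pi.2 (hX t i)
  have hu (M) := (hasDerivAt_trace_mul_inv_mul_mul hXd (hinv t) T M).const_mul (-2 : ℂ)
  have hABA := lie_lie_self_of_trace_eq_zero hA.1 hB.1
  have hABB : ⁅⁅A, B⁆, B⁆ = (2 * (B * B).trace) • A - (2 * (A * B).trace) • B := by
    rw [← lie_skew A B, neg_lie, lie_lie_self_of_trace_eq_zero hB.1 hA.1, trace_mul_comm B A,
      neg_sub]
  simp only [← Ring.lie_def]
  refine ⟨(hu A).congr_deriv ?_, (hu B).congr_deriv ?_, (hu ⁅A, B⁆).congr_deriv ?_⟩ <;>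
    simp only [lie_add, lie_smul, lie_self, ← lie_skew B A, hABA, hABB,
      Matrix.mul_add, Matrix.add_mul, Matrix.mul_sub, Matrix.sub_mul, Matrix.mul_smul,
      Matrix.smul_mul, Matrix.mul_neg, Matrix.neg_mul, mul_zero, zero_mul, trace_zero, trace_add,
      trace_sub, trace_neg, trace_smul, smul_eq_mul] <;>
    ring

theorem stmt7 (A B T : Matrix (Fin 2) (Fin 2) ℂ) (hA : su11 A) (hB : su11 B) (hT : su11 T)
    (X : ℝ → Matrix (Fin 2) (Fin 2) ℂ) (hinv : ∀ t, IsUnit (X t))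
    -- closed-loop dynamics: X′(t) = (A + u_B(t)·B)·X(t) with
    -- u_B(t) = −2·Tr(T·X(t)⁻¹·B·X(t))
    (hX : ∀ t i j, HasDerivAt (fun s => X s i j)
      (((A + (-2 * (T * (X t)⁻¹ * B * X t).trace) • B) * X t) i j) t) :
    ∀ t,
      -- u_A′(t) = u_B(t)·u_C(t)
      HasDerivAt (fun s => -2 * (T * (X s)⁻¹ * A * X s).trace)
        ((-2 * (T * (X t)⁻¹ * B * X t).trace) *
          (-2 * (T * (X t)⁻¹ * (A * B - B * A) * X t).trace)) t ∧
      -- u_B′(t) = −u_C(t)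
      HasDerivAt (fun s => -2 * (T * (X s)⁻¹ * B * X s).trace)
        (-(-2 * (T * (X t)⁻¹ * (A * B - B * A) * X t).trace)) t ∧
      -- u_C′(t) = α·u_A(t) − β·u_B(t) + γ·u_A(t)·u_B(t) − α·u_B(t)²
      HasDerivAt (fun s => -2 * (T * (X s)⁻¹ * (A * B - B * A) * X s).trace)
        ((2 * (A * B).trace) * (-2 * (T * (X t)⁻¹ * A * X t).trace)
          - (2 * (A * A).trace) * (-2 * (T * (X t)⁻¹ * B * X t).trace)
          + (2 * (B * B).trace) * (-2 * (T * (X t)⁻¹ * A * X t).trace) *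
              (-2 * (T * (X t)⁻¹ * B * X t).trace)
          - (2 * (A * B).trace) * (-2 * (T * (X t)⁻¹ * B * X t).trace) ^ 2) t :=
  stmt7_general A B T hA hB X hinv hX
end

section
/- (Quartic ODE for the normal extremal control.) Let α, β, γ ∈ ℝ and let u_A, u_B, u_C : ℝ → ℝ be differentiable functions satisfying u_A′ = u_B·u_C, u_B′ = −u_C, and u_C′ = α·u_A − β·u_B + γ·u_A·u_B − α·u_B². Set c₁ := u_A(0) + (1/2)·u_B(0)² and c₂ := (γ/2)·u_A(0)² − α·u_A(0)·u_B(0) − (1/2)·u_C(0)² − β·u_A(0). Then the function u := u_B satisfies, for all t, (u′(t))² = (γ/4)·u(t)⁴ + α·u(t)³ + (β − γc₁)·u(t)² − 2αc₁·u(t) + γc₁² − 2βc₁ − 2c₂. -/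
/-!
Along the flow, `u_A + u_B² / 2` and `(γ/2) u_A² − α u_A u_B − u_C² / 2 − β u_A` are first
integrals, equal to `c₁` and `c₂`. Since `u_B′ = −u_C`, the second one expresses `(u_B′)²` as a
polynomial in `u_A` and `u_B`, and eliminating `u_A = c₁ − u_B² / 2` with the first one leaves a
quartic in `u_B`.
-/

lemma eq_of_forall_hasDerivAt_zero {f : ℝ → ℝ} (hf : ∀ t, HasDerivAt f 0 t) (t s : ℝ) :
    f t = f s :=
  is_const_of_deriv_eq_zero (fun t => (hf t).differentiableAt) (fun t => (hf t).deriv) t s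

lemma sq_eq_quartic_of_firstIntegrals {α β γ a b c c₁ c₂ : ℝ}
    (h₁ : a + (1 / 2) * b ^ 2 = c₁)
    (h₂ : (γ / 2) * a ^ 2 - α * a * b - (1 / 2) * c ^ 2 - β * a = c₂) :
    c ^ 2 = (γ / 4) * b ^ 4 + α * b ^ 3 + (β - γ * c₁) * b ^ 2
      - 2 * α * c₁ * b + γ * c₁ ^ 2 - 2 * β * c₁ - 2 * c₂ := by
  obtain rfl : a = c₁ - (1 / 2) * b ^ 2 := by linarith
  linear_combination -2 * h₂

section NormalExtremal

variable {α β γ : ℝ} {uA uB uC : ℝ → ℝ}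

lemma hasDerivAt_add_half_sq (hA : ∀ t, HasDerivAt uA (uB t * uC t) t)
    (hB : ∀ t, HasDerivAt uB (-uC t) t) (t : ℝ) :
    HasDerivAt (fun t => uA t + (1 / 2) * uB t ^ 2) 0 t :=
  ((hA t).add (((hB t).pow 2).const_mul (1 / 2))).congr_deriv (by ring)

lemma hasDerivAt_energy (hA : ∀ t, HasDerivAt uA (uB t * uC t) t)
    (hB : ∀ t, HasDerivAt uB (-uC t) t)
    (hC : ∀ t, HasDerivAt uC (α * uA t - β * uB t + γ * uA t * uB t - α * uB t ^ 2) t)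
    (t : ℝ) :
    HasDerivAt
      (fun t => (γ / 2) * uA t ^ 2 - α * uA t * uB t - (1 / 2) * uC t ^ 2 - β * uA t) 0 t :=
  (((((hA t).pow 2).const_mul (γ / 2)).sub (((hA t).const_mul α).mul (hB t))).sub
    (((hC t).pow 2).const_mul (1 / 2))).sub ((hA t).const_mul β) |>.congr_deriv (by ring)

end NormalExtremal

theorem stmt9 (α β γ : ℝ) (uA uB uC : ℝ → ℝ)
    (hA : ∀ t, HasDerivAt uA (uB t * uC t) t)
    (hB : ∀ t, HasDerivAt uB (-uC t) t)
    (hC : ∀ t, HasDerivAt uC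
      (α * uA t - β * uB t + γ * uA t * uB t - α * (uB t) ^ 2) t)
    (c₁ c₂ : ℝ)
    (hc₁ : c₁ = uA 0 + (1 / 2) * (uB 0) ^ 2)
    (hc₂ : c₂ = (γ / 2) * (uA 0) ^ 2 - α * uA 0 * uB 0 - (1 / 2) * (uC 0) ^ 2 - β * uA 0) :
    ∀ t : ℝ, (deriv uB t) ^ 2
      = (γ / 4) * (uB t) ^ 4 + α * (uB t) ^ 3 + (β - γ * c₁) * (uB t) ^ 2
        - 2 * α * c₁ * uB t + γ * c₁ ^ 2 - 2 * β * c₁ - 2 * c₂ := by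
  intro t
  have h₁ := eq_of_forall_hasDerivAt_zero (hasDerivAt_add_half_sq hA hB) t 0
  have h₂ := eq_of_forall_hasDerivAt_zero (hasDerivAt_energy hA hB hC) t 0
  rw [(hB t).deriv, neg_sq]
  exact sq_eq_quartic_of_firstIntegrals (h₁.trans hc₁.symm) (h₂.trans hc₂.symm)
end
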